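/- arXiv:1401.5015 — 3 statements merged into one kernel-verified Lean document; each statement's English description precedes it below -/
import Mathlib

section
/- If there exists a ∈ (0,1) such that the Metropolis-Hastings proposal density satisfies q(y|x) ≥ a·f(y) for all x, y, then the n-step density p^n satisfies |p^n(y)/f(y) − 1| ≤ (1−a)^n · ‖p^0/f − 1‖_∞ for all y. -/
open MeasureTheory Real Filter Set

/-!
Write `p^n = f + g_n` with `|g_n| ≤ c_n f`. Since `∫ g_n = 0`, one step of the chain gives
`g_{n+1}(y) = ∫ g_n(x) (k(x,y) - a f(y)) dx`, and the modified kernel `k(x,y) - a f(y)` is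
nonnegative by the minorization, so `|g_{n+1}(y)| ≤ c_n ∫ f(x) (k(x,y) - a f(y)) dx = c_n (1 - a) f(y)`
by stationarity. Hence `c_{n+1} = (1 - a) c_n`.
-/

lemma abs_div_sub_one_le_iff {u v c : ℝ} (hv : 0 < v) : |u / v - 1| ≤ c ↔ |u - v| ≤ c * v := by
  rw [div_sub_one hv.ne', abs_div, abs_of_pos hv, div_le_iff₀ hv]

lemma aestronglyMeasurable_of_mul_left {X : Type*} [MeasurableSpace X] {μ : Measure X}
    {f κ : X → ℝ} (hf : AEStronglyMeasurable f μ) (hfκ : AEStronglyMeasurable (fun x => f x * κ x) μ)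
    (hf0 : ∀ x, f x ≠ 0) : AEStronglyMeasurable κ μ :=
  (hfκ.aemeasurable.div hf.aemeasurable).aestronglyMeasurable.congr
    (ae_of_all _ fun x => mul_div_cancel_left₀ (κ x) (hf0 x))

lemma abs_integral_mul_sub_integral_mul_le {X : Type*} [MeasurableSpace X] {μ : Measure X}
    {p f κ : X → ℝ} {c m : ℝ} (hp : Integrable p μ) (hf : Integrable f μ)
    (hpf : ∫ x, p x ∂μ = ∫ x, f x ∂μ) (hfκ : Integrable (fun x => f x * κ x) μ)
    (hκ : AEStronglyMeasurable κ μ) (hm : ∀ x, m ≤ κ x) (hbound : ∀ x, |p x - f x| ≤ c * f x) :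
    |∫ x, p x * κ x ∂μ - ∫ x, f x * κ x ∂μ| ≤ c * (∫ x, f x * κ x ∂μ - m * ∫ x, f x ∂μ) := by
  have hκm : ∀ x, 0 ≤ κ x - m := fun x => sub_nonneg.2 (hm x)
  have hdom : Integrable (fun x => c * (f x * κ x) - c * m * f x) μ :=
    (hfκ.const_mul c).sub (hf.const_mul (c * m))
  have hdom_eq : ∀ x, c * (f x * κ x) - c * m * f x = c * f x * (κ x - m) := fun x => by ring
  have hbound' : ∀ x, ‖(p x - f x) * (κ x - m)‖ ≤ c * (f x * κ x) - c * m * f x := fun x => by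
    rw [hdom_eq, norm_mul, Real.norm_eq_abs, Real.norm_eq_abs, abs_of_nonneg (hκm x)]
    exact mul_le_mul_of_nonneg_right (hbound x) (hκm x)
  have hgκ : Integrable (fun x => (p x - f x) * (κ x - m)) μ :=
    hdom.mono' (((hp.sub hf).aestronglyMeasurable).mul (hκ.sub aestronglyMeasurable_const))
      (ae_of_all _ hbound')
  -- `p κ` is integrable because it differs from `f κ` by the dominated term and a multiple of `p - f`.
  have hpκ : Integrable (fun x => p x * κ x) μ := by
    refine ((hgκ.add ((hp.sub hf).const_mul m)).add hfκ).congr (ae_of_all _ fun x => ?_)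
    simp only [Pi.add_apply, Pi.sub_apply]
    ring
  have hshift : ∫ x, p x * κ x ∂μ - ∫ x, f x * κ x ∂μ = ∫ x, (p x - f x) * (κ x - m) ∂μ := by
    have hsplit : ∀ x, (p x - f x) * (κ x - m) = (p x * κ x - f x * κ x) - m * (p x - f x) :=
      fun x => by ring
    have hpf_int : Integrable (fun x => p x - f x) μ := hp.sub hf
    have hpfκ_int : Integrable (fun x => p x * κ x - f x * κ x) μ := hpκ.sub hfκ
    simp_rw [hsplit]
    rw [integral_sub hpfκ_int (hpf_int.const_mul m), integral_const_mul,
      integral_sub hp hf, hpf, integral_sub hpκ hfκ]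
    ring
  calc |∫ x, p x * κ x ∂μ - ∫ x, f x * κ x ∂μ|
      ≤ ∫ x, c * (f x * κ x) - c * m * f x ∂μ := by
        rw [hshift, ← Real.norm_eq_abs]
        exact norm_integral_le_of_norm_le hdom (ae_of_all _ hbound')
    _ = c * (∫ x, f x * κ x ∂μ - m * ∫ x, f x ∂μ) := by
        rw [integral_sub (hfκ.const_mul c) (hf.const_mul (c * m)), integral_const_mul,
          integral_const_mul]
        ring

theorem mh_geometric_ratio_general {X : Type*} [MeasurableSpace X] (lam : Measure X)
    (f : X → ℝ) (k : X → X → ℝ) (p : ℕ → X → ℝ) (a r : ℝ)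
    (hfpos : ∀ y, 0 < f y)
    (hfint : ∫ x, f x ∂lam = 1)
    (hpint : ∀ n, ∫ x, p n x ∂lam = 1)
    (hmin : ∀ x y, a * f y ≤ k x y)
    (hstat : ∀ y, ∫ x, f x * k x y ∂lam = f y)
    (hrec : ∀ n y, p (n + 1) y = ∫ x, p n x * k x y ∂lam)
    (h0 : ∀ y, |p 0 y / f y - 1| ≤ r) :
    ∀ n y, |p n y / f y - 1| ≤ (1 - a) ^ n * r := by
  have hf : Integrable f lam := .of_integral_ne_zero (by simp [hfint])
  have hp : ∀ n, Integrable (p n) lam := fun n => .of_integral_ne_zero (by simp [hpint n])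
  have hfk : ∀ y, Integrable (fun x => f x * k x y) lam := fun y =>
    .of_integral_ne_zero (by rw [hstat y]; exact (hfpos y).ne')
  have hk : ∀ y, AEStronglyMeasurable (fun x => k x y) lam := fun y =>
    aestronglyMeasurable_of_mul_left hf.aestronglyMeasurable (hfk y).aestronglyMeasurable
      fun x => (hfpos x).ne'
  intro n
  induction n with
  | zero => simpa using h0
  | succ n ih =>
    intro y
    have hstep := abs_integral_mul_sub_integral_mul_le (hp n) hf (by rw [hpint n, hfint]) (hfk y)
      (hk y) (fun x => hmin x y) fun x => (abs_div_sub_one_le_iff (hfpos x)).1 (ih x)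
    rw [← hrec, hstat, hfint] at hstep
    rw [abs_div_sub_one_le_iff (hfpos y)]
    calc |p (n + 1) y - f y| ≤ (1 - a) ^ n * r * (f y - a * f y * 1) := hstep
      _ = (1 - a) ^ (n + 1) * r * f y := by ring

/-- Holden's geometric bound for the Metropolis-Hastings chain: if the transition
density `k` (built from the proposal `q`) satisfies the minorization
`k x y ≥ a * f y` with `a ∈ (0,1)`, where `f` is the stationary (target) density,
then the `n`-step density ratio contracts geometrically:
`|p^n(y)/f(y) - 1| ≤ (1-a)^n * r`, with `r = ‖p^0/f - 1‖_∞`. -/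
theorem mh_geometric_ratio {X : Type*} [MeasurableSpace X] (lam : Measure X)
    (f : X → ℝ) (k : X → X → ℝ) (p : ℕ → X → ℝ) (a r : ℝ)
    (ha : a ∈ Set.Ioo (0 : ℝ) 1)
    (hfpos : ∀ y, 0 < f y)
    (hfint : ∫ x, f x ∂lam = 1)
    (hppos : ∀ n x, 0 ≤ p n x)
    (hpint : ∀ n, ∫ x, p n x ∂lam = 1)
    (hkpos : ∀ x y, 0 ≤ k x y)
    (hknorm : ∀ x, ∫ y, k x y ∂lam = 1)
    (hmin : ∀ x y, a * f y ≤ k x y)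
    (hstat : ∀ y, ∫ x, f x * k x y ∂lam = f y)
    (hrec : ∀ n y, p (n + 1) y = ∫ x, p n x * k x y ∂lam)
    (h0 : ∀ y, |p 0 y / f y - 1| ≤ r) :
    ∀ n y, |p n y / f y - 1| ≤ (1 - a) ^ n * r :=
  mh_geometric_ratio_general lam f k p a r hfpos hfint hpint hmin hstat hrec h0
end

section
/- Under the uniform minorization q(y|x) ≥ δ·f(y) with δ ∈ (0,1), for α > 1 the Rényi divergence satisfies R_α(p^n, f) ≤ (α/(α−1))·r·ν^n, where r = ‖p^0/f − 1‖_∞ and ν = 1−δ. -/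
/-! The pointwise bound `|pⁿ/f - 1| ≤ c` gives `pⁿ ≤ (1 + c) f`, so the Rényi integrand satisfies
`(pⁿ)^α f^(1-α) ≤ (1 + c)^α f`, and integrating against the probability density `f` bounds the
integral by `(1 + c)^α`. Taking logarithms and using `log (1 + c) ≤ c` yields `α c / (α - 1)`. -/

open MeasureTheory Real

lemma le_one_add_mul_of_abs_div_sub_one_le {a b c : ℝ} (hb : 0 < b) (h : |a / b - 1| ≤ c) :
    a ≤ (1 + c) * b := by
  have h' : a / b ≤ 1 + c := by linarith [(abs_le.mp h).2]
  rwa [div_le_iff₀ hb] at h'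

lemma rpow_mul_rpow_one_sub_le {a b K α : ℝ} (ha : 0 ≤ a) (hb : 0 < b) (hK : 0 ≤ K)
    (hα : 0 ≤ α) (hab : a ≤ K * b) : a ^ α * b ^ (1 - α) ≤ K ^ α * b :=
  calc a ^ α * b ^ (1 - α) ≤ (K * b) ^ α * b ^ (1 - α) := by gcongr
    _ = K ^ α * (b ^ α * b ^ (1 - α)) := by rw [mul_rpow hK hb.le, mul_assoc]
    _ = K ^ α * b := by rw [← rpow_add hb, add_sub_cancel, rpow_one]

lemma integral_rpow_mul_rpow_one_sub_le {X : Type*} [MeasurableSpace X] {μ : Measure X}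
    {p f : X → ℝ} {K α : ℝ} (hp : ∀ y, 0 ≤ p y) (hf : ∀ y, 0 < f y) (hf1 : ∫ y, f y ∂μ = 1)
    (hK : 0 ≤ K) (hα : 0 ≤ α) (hpf : ∀ y, p y ≤ K * f y) :
    ∫ y, p y ^ α * f y ^ (1 - α) ∂μ ≤ K ^ α :=
  calc ∫ y, p y ^ α * f y ^ (1 - α) ∂μ ≤ ∫ y, K ^ α * f y ∂μ :=
        integral_mono_of_nonneg
          (ae_of_all _ fun y => by have := hf y; have := hp y; positivity)
          ((integrable_of_integral_eq_one hf1).const_mul _)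
          (ae_of_all _ fun y => rpow_mul_rpow_one_sub_le (hp y) (hf y) hK hα (hpf y))
    _ = K ^ α := by rw [integral_const_mul, hf1, mul_one]

lemma log_le_mul_of_le_one_add_rpow {I c α : ℝ} (hI0 : 0 ≤ I) (hc : 0 ≤ c) (hα : 0 ≤ α)
    (hI : I ≤ (1 + c) ^ α) : log I ≤ α * c := by
  rcases hI0.eq_or_lt with rfl | hI0
  · rw [log_zero]
    positivity
  have hc1 : 0 < 1 + c := by linarith
  calc log I ≤ log ((1 + c) ^ α) := log_le_log hI0 hI
    _ = α * log (1 + c) := log_rpow hc1 α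
    _ ≤ α * c := by
      gcongr
      linarith [log_le_sub_one_of_pos hc1]

theorem renyi_geometric_bound_general {X : Type*} [MeasurableSpace X] (lam : Measure X)
    (f : X → ℝ) (p : ℕ → X → ℝ) (δ r α : ℝ) (n : ℕ)
    (hα : 1 < α)
    (hfpos : ∀ y, 0 < f y)
    (hfint : ∫ x, f x ∂lam = 1)
    (hppos : ∀ m y, 0 ≤ p m y)
    (hbound : ∀ m y, |p m y / f y - 1| ≤ r * (1 - δ) ^ m) :
    (α - 1)⁻¹ * Real.log (∫ y, p n y ^ α * f y ^ (1 - α) ∂lam)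
      ≤ (α / (α - 1)) * (r * (1 - δ) ^ n) := by
  set c := r * (1 - δ) ^ n
  -- `c ≥ 0` because it bounds an absolute value, at a point that exists since `∫ f = 1`.
  obtain ⟨y₀, -⟩ := exists_ne_zero_of_integral_ne_zero (hfint ▸ one_ne_zero : ∫ x, f x ∂lam ≠ 0)
  have hc : 0 ≤ c := (abs_nonneg _).trans (hbound n y₀)
  have hα0 : 0 ≤ α := by linarith
  have hI := integral_rpow_mul_rpow_one_sub_le (μ := lam) (K := 1 + c) (hppos n) hfpos hfint
    (by linarith) hα0 fun y => le_one_add_mul_of_abs_div_sub_one_le (hfpos y) (hbound n y)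
  have hI0 : 0 ≤ ∫ y, p n y ^ α * f y ^ (1 - α) ∂lam :=
    integral_nonneg fun y => by have := hfpos y; have := hppos n y; positivity
  calc (α - 1)⁻¹ * log (∫ y, p n y ^ α * f y ^ (1 - α) ∂lam) ≤ (α - 1)⁻¹ * (α * c) := by
        have : 0 ≤ (α - 1)⁻¹ := inv_nonneg.mpr (by linarith)
        gcongr
        exact log_le_mul_of_le_one_add_rpow hI0 hc hα0 hI
    _ = α / (α - 1) * c := by ring

/-- Under the uniform minorization `q(y|x) ≥ δ f(y)` with `δ ∈ (0,1)` (which yields the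
pointwise geometric bound `|pⁿ(y)/f(y) - 1| ≤ r νⁿ` with `ν = 1 - δ`), for `α > 1`
the Rényi divergence satisfies `R_α(pⁿ, f) ≤ (α/(α-1)) r νⁿ`. -/
theorem renyi_geometric_bound {X : Type*} [MeasurableSpace X] (lam : Measure X)
    (f : X → ℝ) (q : X → X → ℝ) (p : ℕ → X → ℝ) (δ r α : ℝ) (n : ℕ)
    (hδ : δ ∈ Set.Ioo (0 : ℝ) 1)
    (hα : 1 < α)
    (hr : 0 ≤ r)
    (hfpos : ∀ y, 0 < f y)
    (hfint : ∫ x, f x ∂lam = 1)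
    (hppos : ∀ m y, 0 ≤ p m y)
    (hpint : ∀ m, ∫ y, p m y ∂lam = 1)
    (hmin : ∀ x y, δ * f y ≤ q x y)
    (hbound : ∀ m y, |p m y / f y - 1| ≤ r * (1 - δ) ^ m) :
    (α - 1)⁻¹ * Real.log (∫ y, p n y ^ α * f y ^ (1 - α) ∂lam)
      ≤ (α / (α - 1)) * (r * (1 - δ) ^ n) :=
  renyi_geometric_bound_general lam f p δ r α n hα hfpos hfint hppos hbound
end

section
/- Under the minorization bound |p^n/f − 1| ≤ r·ν^n with ν ∈ (0,1), for α > 1 the α-divergence satisfies |D_α(p^n, f)| ≤ (1/(α(α−1)))·((r·ν^n + 1)^α − 1), hence D_α(p^n, f) → 0 as n → ∞. -/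
open MeasureTheory Real Filter Set Topology

/-!
With `q = p / f`, the integral `∫ p ^ α * f ^ (1 - α)` is `∫ q ^ α * f`, the `α`-th moment of `q`
under the density `f`. Bernoulli's inequality `q ^ α ≥ 1 + α (q - 1)` bounds it below by
`∫ f + α (∫ p - ∫ f) = 1`, and `q ≤ 1 + r νⁿ` bounds it above by `(1 + r νⁿ) ^ α`. Hence
`0 ≤ α (α - 1) D_α(pⁿ, f) ≤ (r νⁿ + 1) ^ α - 1`, which tends to `0`.
-/

section Pointwise

variable {α p f : ℝ}

lemma rpow_mul_rpow_one_sub_eq (hp : 0 ≤ p) (hf : 0 < f) :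
    p ^ α * f ^ (1 - α) = (p / f) ^ α * f := by
  rw [div_rpow hp hf.le, rpow_sub hf, rpow_one]
  field_simp

lemma add_mul_sub_le_rpow_mul_rpow_one_sub (hα : 1 ≤ α) (hp : 0 ≤ p) (hf : 0 < f) :
    f + α * (p - f) ≤ p ^ α * f ^ (1 - α) := by
  have bernoulli : 1 + α * (p / f - 1) ≤ (p / f) ^ α := by
    simpa using one_add_mul_self_le_rpow_one_add
      (s := p / f - 1) (by linarith [div_nonneg hp hf.le]) hα
  calc f + α * (p - f) = (1 + α * (p / f - 1)) * f := by field_simp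
    _ ≤ (p / f) ^ α * f := by gcongr
    _ = p ^ α * f ^ (1 - α) := (rpow_mul_rpow_one_sub_eq hp hf).symm

lemma rpow_mul_rpow_one_sub_le_s12 {c : ℝ} (hα : 0 ≤ α) (hp : 0 ≤ p) (hf : 0 < f)
    (hpc : p ≤ c * f) : p ^ α * f ^ (1 - α) ≤ c ^ α * f := by
  rw [rpow_mul_rpow_one_sub_eq hp hf]
  gcongr
  rwa [div_le_iff₀ hf]

end Pointwise

noncomputable def alphaDivergence {X : Type*} [MeasurableSpace X] (α : ℝ) (μ : Measure X)
    (p f : X → ℝ) : ℝ :=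
  (α * (1 - α))⁻¹ * (1 - ∫ x, p x ^ α * f x ^ (1 - α) ∂μ)

section Integral

variable {X : Type*} [MeasurableSpace X] {μ : Measure X} {p f : X → ℝ} {α c : ℝ}

lemma integrable_rpow_mul_rpow_one_sub (hα : 0 ≤ α) (hp : AEMeasurable p μ)
    (hf : Integrable f μ) (hp0 : ∀ x, 0 ≤ p x) (hf0 : ∀ x, 0 < f x)
    (hpc : ∀ x, p x ≤ c * f x) :
    Integrable (fun x ↦ p x ^ α * f x ^ (1 - α)) μ := by
  refine (hf.const_mul (c ^ α)).mono'
    ((hp.pow_const α).mul (hf.aemeasurable.pow_const _)).aestronglyMeasurable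
    (ae_of_all _ fun x ↦ ?_)
  rw [norm_of_nonneg (mul_nonneg (rpow_nonneg (hp0 x) _) (rpow_nonneg (hf0 x).le _))]
  exact rpow_mul_rpow_one_sub_le_s12 hα (hp0 x) (hf0 x) (hpc x)

lemma one_le_integral_rpow_mul_rpow_one_sub (hα : 1 ≤ α) (hp : ∫ x, p x ∂μ = 1)
    (hf : ∫ x, f x ∂μ = 1) (hp0 : ∀ x, 0 ≤ p x) (hf0 : ∀ x, 0 < f x)
    (hint : Integrable (fun x ↦ p x ^ α * f x ^ (1 - α)) μ) :
    1 ≤ ∫ x, p x ^ α * f x ^ (1 - α) ∂μ := by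
  have hpI := integrable_of_integral_eq_one hp
  have hfI := integrable_of_integral_eq_one hf
  have hlinI : Integrable (fun x ↦ α * (p x - f x)) μ := (hpI.sub hfI).const_mul α
  calc 1 = ∫ x, f x + α * (p x - f x) ∂μ := by
        rw [integral_add hfI hlinI, integral_const_mul, integral_sub hpI hfI, hp, hf]
        ring
    _ ≤ ∫ x, p x ^ α * f x ^ (1 - α) ∂μ := integral_mono (hfI.add hlinI) hint
        fun x ↦ add_mul_sub_le_rpow_mul_rpow_one_sub hα (hp0 x) (hf0 x)

lemma integral_rpow_mul_rpow_one_sub_le_s12 (hα : 0 ≤ α) (hf : ∫ x, f x ∂μ = 1)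
    (hp0 : ∀ x, 0 ≤ p x) (hf0 : ∀ x, 0 < f x) (hpc : ∀ x, p x ≤ c * f x)
    (hint : Integrable (fun x ↦ p x ^ α * f x ^ (1 - α)) μ) :
    ∫ x, p x ^ α * f x ^ (1 - α) ∂μ ≤ c ^ α := by
  calc ∫ x, p x ^ α * f x ^ (1 - α) ∂μ ≤ ∫ x, c ^ α * f x ∂μ :=
        integral_mono hint ((integrable_of_integral_eq_one hf).const_mul _)
          fun x ↦ rpow_mul_rpow_one_sub_le_s12 hα (hp0 x) (hf0 x) (hpc x)
    _ = c ^ α := by rw [integral_const_mul, hf, mul_one]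

theorem abs_alphaDivergence_le (hα : 1 < α) (hp : ∫ x, p x ∂μ = 1) (hf : ∫ x, f x ∂μ = 1)
    (hp0 : ∀ x, 0 ≤ p x) (hf0 : ∀ x, 0 < f x) (hpc : ∀ x, p x ≤ c * f x) :
    |alphaDivergence α μ p f| ≤ (α * (α - 1))⁻¹ * (c ^ α - 1) := by
  have hα0 : 0 ≤ α := by linarith
  have hint := integrable_rpow_mul_rpow_one_sub hα0
    (integrable_of_integral_eq_one hp).aemeasurable (integrable_of_integral_eq_one hf)
    hp0 hf0 hpc
  have lower := one_le_integral_rpow_mul_rpow_one_sub hα.le hp hf hp0 hf0 hint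
  have upper := integral_rpow_mul_rpow_one_sub_le_s12 hα0 hf hp0 hf0 hpc hint
  have hαα : 0 < α * (α - 1) := mul_pos (by linarith) (by linarith)
  have hdiv : alphaDivergence α μ p f
      = (α * (α - 1))⁻¹ * (∫ x, p x ^ α * f x ^ (1 - α) ∂μ - 1) := by
    rw [alphaDivergence, show α * (1 - α) = -(α * (α - 1)) by ring, inv_neg]
    ring
  rw [hdiv, abs_of_nonneg (mul_nonneg (inv_nonneg.2 hαα.le) (sub_nonneg.2 lower))]
  gcongr

end Integral

theorem alpha_divergence_geometric_general {X : Type*} [MeasurableSpace X] (lam : Measure X)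
    (f : X → ℝ) (p : ℕ → X → ℝ) (r ν α : ℝ)
    (hν : ν ∈ Set.Ioo (0 : ℝ) 1)
    (hα : 1 < α)
    (hfpos : ∀ y, 0 < f y)
    (hfint : ∫ x, f x ∂lam = 1)
    (hppos : ∀ n y, 0 ≤ p n y)
    (hpint : ∀ n, ∫ y, p n y ∂lam = 1)
    (hbound : ∀ n y, |p n y / f y - 1| ≤ r * ν ^ n) :
    (∀ n : ℕ,
      |(α * (1 - α))⁻¹ * (1 - ∫ y, p n y ^ α * f y ^ (1 - α) ∂lam)|
        ≤ (α * (α - 1))⁻¹ * ((r * ν ^ n + 1) ^ α - 1)) ∧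
    Filter.Tendsto
      (fun n : ℕ => (α * (1 - α))⁻¹ * (1 - ∫ y, p n y ^ α * f y ^ (1 - α) ∂lam))
      Filter.atTop (𝓝 0) := by
  have bound (n : ℕ) : |alphaDivergence α lam (p n) f|
      ≤ (α * (α - 1))⁻¹ * ((r * ν ^ n + 1) ^ α - 1) :=
    abs_alphaDivergence_le hα (hpint n) hfint (hppos n) hfpos fun y ↦ by
      have := (abs_le.1 (hbound n y)).2
      rwa [sub_le_iff_le_add, div_le_iff₀ (hfpos y)] at this
  refine ⟨bound, squeeze_zero_norm bound ?_⟩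
  have hgeom : Tendsto (fun n : ℕ ↦ r * ν ^ n + 1) atTop (𝓝 1) := by
    simpa using ((tendsto_pow_atTop_nhds_zero_of_lt_one hν.1.le hν.2).const_mul r).add_const 1
  simpa using ((hgeom.rpow_const (Or.inl one_ne_zero)).sub_const 1).const_mul (α * (α - 1))⁻¹

/-- Under the minorization bound `|pⁿ/f - 1| ≤ r νⁿ` with `ν ∈ (0,1)`, for `α > 1` the
α-divergence satisfies `|D_α(pⁿ, f)| ≤ (α(α-1))⁻¹ ((r νⁿ + 1)^α - 1)`, hence
`D_α(pⁿ, f) → 0` as `n → ∞`. -/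
theorem alpha_divergence_geometric {X : Type*} [MeasurableSpace X] (lam : Measure X)
    (f : X → ℝ) (p : ℕ → X → ℝ) (r ν α : ℝ)
    (hν : ν ∈ Set.Ioo (0 : ℝ) 1)
    (hα : 1 < α)
    (hr : 0 ≤ r)
    (hfpos : ∀ y, 0 < f y)
    (hfint : ∫ x, f x ∂lam = 1)
    (hppos : ∀ n y, 0 ≤ p n y)
    (hpint : ∀ n, ∫ y, p n y ∂lam = 1)
    (hbound : ∀ n y, |p n y / f y - 1| ≤ r * ν ^ n) :
    (∀ n : ℕ,
      |(α * (1 - α))⁻¹ * (1 - ∫ y, p n y ^ α * f y ^ (1 - α) ∂lam)|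
        ≤ (α * (α - 1))⁻¹ * ((r * ν ^ n + 1) ^ α - 1)) ∧
    Filter.Tendsto
      (fun n : ℕ => (α * (1 - α))⁻¹ * (1 - ∫ y, p n y ^ α * f y ^ (1 - α) ∂lam))
      Filter.atTop (𝓝 0) :=
  alpha_divergence_geometric_general lam f p r ν α hν hα hfpos hfint hppos hpint hbound
end
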